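/- If the PPDG sequence {(x^k, y^k)} is bounded, then ∑_{k=1}^∞ ‖x^{k+1} - x^k‖² < ∞ and ∑_{k=1}^∞ ‖y^{k+1} - y^k‖² < ∞; in particular ‖x^{k+1} - x^k‖ → 0 and ‖y^{k+1} - y^k‖ → 0. -/

import Mathlib

/-!
For a suitable weight `β`, the function
`Λ(xᵏ⁺¹, yᵏ⁺¹) + β ‖xᵏ⁺¹ - xᵏ‖² - (L/2) ‖xᵏ⁺² - xᵏ⁺¹‖²`, with `Λ` the Lagrangian, decreases by
`(1/α - 5L/2 - αL²) ‖xᵏ⁺² - xᵏ⁺¹‖²` per iteration: the gradient step in `x` lowers `Λ` by the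
descent lemma, while the proximal step in `y` raises it by at most a coupling term controlled by
the Lipschitz gradient, and the decrease constant is positive by AM-GM once `c > 0`.
Bounded iterates keep this Lyapunov function bounded below, so the `x`-steps are square summable.
Since `α Aᵀ(yᵏ⁺¹ - yᵏ)` is a combination of two consecutive `x`-steps and a gradient difference,
and `Aᵀ` is injective (hence bounded below) as `A` is surjective, so are the `y`-steps.
-/

open RealInnerProductSpace Filter Set Topology

noncomputable section

theorem le_add_inner_add_sq_of_lipschitz_gradient {E : Type*} [NormedAddCommGroup E]
    [InnerProductSpace ℝ E] [CompleteSpace E] {f : E → ℝ} {f' : E → E} {L : ℝ}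
    (hf : ∀ p, HasGradientAt f (f' p) p) (hLip : ∀ p q, ‖f' p - f' q‖ ≤ L * ‖p - q‖)
    (p q : E) : f q ≤ f p + ⟪f' p, q - p⟫ + L / 2 * ‖q - p‖ ^ 2 := by
  set d := q - p
  let g : ℝ → ℝ := fun t => f (p + t • d) - t * ⟪f' p, d⟫ - L / 2 * t ^ 2 * ‖d‖ ^ 2
  have hg : ∀ t, HasDerivAt g (⟪f' (p + t • d), d⟫ - ⟪f' p, d⟫ - L * t * ‖d‖ ^ 2) t := by
    intro t
    have hline : HasDerivAt (fun s : ℝ => p + s • d) d t := by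
      simpa using ((hasDerivAt_id t).smul_const d).const_add p
    have hfline := (hf (p + t • d)).hasFDerivAt.comp_hasDerivAt t hline
    refine ((hfline.sub ((hasDerivAt_id t).mul_const ⟪f' p, d⟫)).sub
      (((hasDerivAt_pow 2 t).const_mul (L / 2)).mul_const (‖d‖ ^ 2))).congr_deriv ?_
    simp only [InnerProductSpace.toDual_apply_apply]
    ring
  have hanti : AntitoneOn g (Ici 0) := by
    refine antitoneOn_of_hasDerivWithinAt_nonpos (convex_Ici 0)
      (fun t _ => (hg t).continuousAt.continuousWithinAt) (fun t _ => (hg t).hasDerivWithinAt) ?_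
    intro t ht
    rw [interior_Ici, mem_Ioi] at ht
    have hcs : ⟪f' (p + t • d) - f' p, d⟫ ≤ L * t * ‖d‖ ^ 2 := calc
      _ ≤ ‖f' (p + t • d) - f' p‖ * ‖d‖ := real_inner_le_norm _ _
      _ ≤ L * ‖p + t • d - p‖ * ‖d‖ := by gcongr; exact hLip _ _
      _ = L * t * ‖d‖ ^ 2 := by
        rw [add_sub_cancel_left, norm_smul, Real.norm_of_nonneg ht.le]; ring
    rw [inner_sub_left] at hcs
    linarith
  have h01 := hanti (mem_Ici.2 le_rfl) (mem_Ici.2 zero_le_one) zero_le_one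
  simp only [g, d, one_smul, zero_smul, add_zero, add_sub_cancel, one_mul, one_pow, mul_one,
    zero_mul, mul_zero, sub_zero, ne_eq, OfNat.ofNat_ne_zero, not_false_eq_true, zero_pow,
    tsub_le_iff_right] at h01
  linarith

theorem ConvexOn.neg_fderiv_le_of_isMinOn_add {E : Type*} [NormedAddCommGroup E]
    [NormedSpace ℝ E] {h g : E → ℝ} {g' : E →L[ℝ] ℝ} {p : E} (hh : ConvexOn ℝ univ h)
    (hg : HasFDerivAt g g' p) (hmin : IsMinOn (h + g) univ p) (z : E) :
    -g' (z - p) ≤ h z - h p := by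
  set d := z - p
  have hline : HasDerivAt (fun t : ℝ => g (p + t • d)) (g' d) 0 := by
    have hl : HasDerivAt (fun t : ℝ => p + t • d) d 0 := by
      simpa using ((hasDerivAt_id (0 : ℝ)).smul_const d).const_add p
    exact (by simpa using hg : HasFDerivAt g g' (p + (0 : ℝ) • d)).comp_hasDerivAt 0 hl
  rw [neg_le]
  refine ge_of_tendsto hline.tendsto_slope_zero_right ?_
  filter_upwards [Ioo_mem_nhdsGT zero_lt_one] with t ht
  have hconv : h (p + t • d) ≤ h p + t * (h z - h p) := by
    have := hh.2 (mem_univ p) (mem_univ z) (sub_nonneg.2 ht.2.le) ht.1.le (by ring)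
    rw [show (1 - t) • p + t • z = p + t • d by simp only [d]; module] at this
    simp only [smul_eq_mul] at this
    linarith
  have hle : h p + g p ≤ h (p + t • d) + g (p + t • d) := isMinOn_univ_iff.1 hmin _
  rw [zero_add, zero_smul, add_zero, smul_eq_mul, le_inv_mul_iff₀ ht.1]
  linarith

theorem ContinuousLinearMap.exists_antilipschitzWith_adjoint {X Y : Type*}
    [NormedAddCommGroup X] [InnerProductSpace ℝ X] [CompleteSpace X]
    [NormedAddCommGroup Y] [InnerProductSpace ℝ Y] [FiniteDimensional ℝ Y]
    (A : X →L[ℝ] Y) (hA : Function.Surjective A) : ∃ K, AntilipschitzWith K A.adjoint := by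
  have hker : LinearMap.ker (A.adjoint : Y →ₗ[ℝ] X) = ⊥ := by
    rw [← ContinuousLinearMap.orthogonal_range, LinearMap.range_eq_top.2 hA,
      Submodule.top_orthogonal_eq_bot]
  obtain ⟨K, -, hK⟩ := LinearMap.exists_antilipschitzWith _ hker
  exact ⟨K, hK⟩

theorem Continuous.bddBelow_range_comp {E : Type*} [NormedAddCommGroup E] [ProperSpace E]
    {φ : E → ℝ} (hφ : Continuous φ) {s : ℕ → E} {R : ℝ} (hR : ∀ k, ‖s k‖ ≤ R) :
    BddBelow (range (φ ∘ s)) := by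
  refine ((isCompact_closedBall 0 R).bddBelow_image hφ.continuousOn).mono ?_
  rintro _ ⟨k, rfl⟩
  exact ⟨s k, mem_closedBall_zero_iff.2 (hR k), rfl⟩

theorem summable_of_add_mul_le {V u : ℕ → ℝ} {ε : ℝ} (hε : 0 < ε) (hu : ∀ k, 0 ≤ u k)
    (hV : BddBelow (range V)) (hstep : ∀ k, V (k + 1) + ε * u k ≤ V k) : Summable u := by
  obtain ⟨C, hC⟩ := hV
  have htel : ∀ N, V N + ε * ∑ k ∈ Finset.range N, u k ≤ V 0 := by
    intro N
    induction N with
    | zero => simp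
    | succ N ih => rw [Finset.sum_range_succ]; linarith [hstep N]
  refine summable_of_sum_range_le hu (c := (V 0 - C) / ε) fun N => ?_
  rw [le_div_iff₀ hε]
  linarith [htel N, hC ⟨N, rfl⟩]

theorem tendsto_norm_atTop_zero_of_summable_sq {E : Type*} [NormedAddCommGroup E] {v : ℕ → E}
    (h : Summable fun k => ‖v k‖ ^ 2) : Tendsto (fun k => ‖v k‖) atTop (𝓝 0) := by
  simpa [Real.sqrt_sq (norm_nonneg _)] using h.tendsto_atTop_zero.sqrt

theorem ppdg_lyapunov_constant_pos {α L δ : ℝ} (hα : 0 < α) (hδ : 0 < δ)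
    (hc : 0 < 1/(2*α) - L/4 - δ/α - α*δ*L^2/2 - δ*L + α*L^2/(4*δ) - α*L^2/(2*δ)) :
    0 < 1/α - 5*L/2 - α*L^2 := by
  have hamgm : L + α*L^2/2 ≤ δ/α + α*δ*L^2/2 + δ*L + α*L^2/(4*δ) := by
    have hsq : 0 ≤ (2*δ*(1 + α*L/2) - α*L)^2 + (δ*α*L)^2 := by positivity
    have : δ/α + α*δ*L^2/2 + δ*L + α*L^2/(4*δ) - (L + α*L^2/2)
        = ((2*δ*(1 + α*L/2) - α*L)^2 + (δ*α*L)^2) / (4*α*δ) := by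
      field_simp; ring
    linarith [div_nonneg hsq (by positivity : (0:ℝ) ≤ 4*α*δ)]
  have h1 : 1/(2*α) = (1/α)/2 := by ring
  have h2 : α*L^2/(2*δ) = 2*(α*L^2/(4*δ)) := by ring
  linarith

section PPDG

variable {X Y : Type*} [NormedAddCommGroup X] [InnerProductSpace ℝ X]
  [NormedAddCommGroup Y] [InnerProductSpace ℝ Y]
  (A : X →L[ℝ] Y) {f : X → ℝ} {f' : X → X} {hs : Y → ℝ} {L α : ℝ} {x : ℕ → X} {y : ℕ → Y}

variable (f hs) in
def lagrangian (p : X) (w : Y) : ℝ := f p + ⟪w, A p⟫ - hs w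

theorem bddBelow_lagrangian_of_bounded [ProperSpace X] [ProperSpace Y] (hf : Continuous f)
    (hh : Continuous hs) {R : ℝ} (hR : ∀ k, ‖x k‖ ≤ R ∧ ‖y k‖ ≤ R) :
    BddBelow (range fun k => lagrangian A f hs (x k) (y k)) := by
  have hcont : Continuous fun z : X × Y => lagrangian A f hs z.1 z.2 :=
    ((hf.comp continuous_fst).add (continuous_snd.inner (A.continuous.comp continuous_fst))).sub
      (hh.comp continuous_snd)
  exact hcont.bddBelow_range_comp (s := fun k => (x k, y k)) fun k => norm_prod_le_iff.2 (hR k)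

variable (f hs L α x y) in
/-- The weights of the squared steps absorb the coupling term of `lagrangian_dual_step_le`
via `2ab ≤ a² + b²`. -/
def ppdgLyapunov (k : ℕ) : ℝ :=
  lagrangian A f hs (x (k+1)) (y (k+1)) + (L * (1 + α * L) / 2 + L / 2) * ‖x (k+1) - x k‖ ^ 2
    - L / 2 * ‖x (k+2) - x (k+1)‖ ^ 2

theorem ppdgLyapunov_bddBelow (hL : 0 ≤ L) (hα : 0 ≤ α)
    (hΛ : BddBelow (range fun k => lagrangian A f hs (x k) (y k))) {R : ℝ}
    (hR : ∀ k, ‖x k‖ ≤ R) : BddBelow (range (ppdgLyapunov A f hs L α x y)) := by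
  obtain ⟨C, hC⟩ := hΛ
  refine ⟨C - L / 2 * (2 * R) ^ 2, ?_⟩
  rintro _ ⟨k, rfl⟩
  have hΛk : C ≤ lagrangian A f hs (x (k+1)) (y (k+1)) := hC ⟨k+1, rfl⟩
  have hstep : ‖x (k+2) - x (k+1)‖ ^ 2 ≤ (2 * R) ^ 2 :=
    pow_le_pow_left₀ (norm_nonneg _) ((norm_sub_le _ _).trans (by linarith [hR (k+2), hR (k+1)])) 2
  have hweight : 0 ≤ (L * (1 + α * L) / 2 + L / 2) * ‖x (k+1) - x k‖ ^ 2 := by positivity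
  simp only [ppdgLyapunov]
  nlinarith

variable [CompleteSpace X] [CompleteSpace Y]

theorem inner_smul_adjoint_self (α : ℝ) (s : Y) :
    ⟪α • A (A.adjoint s), s⟫ = α * ‖A.adjoint s‖ ^ 2 := by
  rw [real_inner_smul_left, ← A.adjoint_inner_right, real_inner_self_eq_norm_sq]

variable (hs α) in
def ppdgDualObjective (v y₀ w : Y) : ℝ :=
  hs w - ⟪w, v⟫ + (1/2) * ⟪α • A (A.adjoint (w - y₀)), w - y₀⟫

theorem ppdg_dual_step_subgradient (hconv : ConvexOn ℝ univ hs) {p y₀ v : Y}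
    (hmin : IsMinOn (ppdgDualObjective A hs α v y₀) univ p) (z : Y) :
    ⟪z - p, v - α • A (A.adjoint (p - y₀))⟫ ≤ hs z - hs p := by
  have hg := ((A.adjoint.hasFDerivAt.comp p ((hasFDerivAt_id p).sub_const y₀)).norm_sq.const_mul
    (α / 2)).sub (innerSL ℝ v).hasFDerivAt
  have hsub := hconv.neg_fderiv_le_of_isMinOn_add hg (isMinOn_univ_iff.2 fun w => ?_) z
  · convert hsub using 1
    simp only [sub_apply, smul_apply, ContinuousLinearMap.comp_apply, innerSL_apply_apply,
      Function.comp_apply, id, ContinuousLinearMap.id_apply, smul_eq_mul, nsmul_eq_mul]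
    rw [inner_sub_right, real_inner_smul_right, ← A.adjoint_inner_left, real_inner_comm v,
      real_inner_comm (A.adjoint (z - p))]
    push_cast
    ring
  · have hpw := isMinOn_univ_iff.1 hmin w
    simp only [ppdgDualObjective, inner_smul_adjoint_self] at hpw
    simp only [Pi.add_apply, Pi.sub_apply, Function.comp_apply, id, innerSL_apply_apply]
    rw [real_inner_comm p v, real_inner_comm w v]
    linarith

theorem lagrangian_gradient_step_le (hf : ∀ p, HasGradientAt f (f' p) p)
    (hLip : ∀ p q, ‖f' p - f' q‖ ≤ L * ‖p - q‖) (hα : 0 < α) {p q : X} {w : Y}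
    (hq : q = p - α • (f' p + A.adjoint w)) :
    lagrangian A f hs q w ≤ lagrangian A f hs p w - (1/α - L/2) * ‖q - p‖ ^ 2 := by
  have hdesc := le_add_inner_add_sq_of_lipschitz_gradient hf hLip p q
  have hstep : α * (⟪f' p, q - p⟫ + (⟪w, A q⟫ - ⟪w, A p⟫)) = -‖q - p‖ ^ 2 := by
    rw [← inner_sub_right, ← map_sub, ← A.adjoint_inner_left, ← inner_add_left,
      ← real_inner_smul_left, show α • (f' p + A.adjoint w) = -(q - p) by rw [hq]; abel,
      inner_neg_left, real_inner_self_eq_norm_sq]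
  have hinner : ⟪f' p, q - p⟫ + (⟪w, A q⟫ - ⟪w, A p⟫) = -(1/α) * ‖q - p‖ ^ 2 := by
    field_simp; linarith
  simp only [lagrangian]
  linarith

theorem ppdg_smul_adjoint_dual_diff
    (hx : ∀ k, x (k+1) = x k - α • (f' (x k) + A.adjoint (y k))) (k : ℕ) :
    α • A.adjoint (y (k+1) - y k)
      = (x (k+1) - x k) - (x (k+2) - x (k+1)) + α • (f' (x k) - f' (x (k+1))) := by
  rw [map_sub]
  linear_combination (norm := module) hx (k+1) - hx k

theorem ppdg_norm_adjoint_dual_diff_le (hLip : ∀ p q, ‖f' p - f' q‖ ≤ L * ‖p - q‖)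
    (hα : 0 < α) (hx : ∀ k, x (k+1) = x k - α • (f' (x k) + A.adjoint (y k))) (k : ℕ) :
    α * ‖A.adjoint (y (k+1) - y k)‖
      ≤ (1 + α * L) * ‖x (k+1) - x k‖ + ‖x (k+2) - x (k+1)‖ := by
  have hgrad : ‖α • (f' (x k) - f' (x (k+1)))‖ ≤ α * (L * ‖x (k+1) - x k‖) := by
    rw [norm_smul, Real.norm_of_nonneg hα.le, norm_sub_rev (x (k+1))]
    exact mul_le_mul_of_nonneg_left (hLip _ _) hα.le
  calc α * ‖A.adjoint (y (k+1) - y k)‖ = ‖α • A.adjoint (y (k+1) - y k)‖ := by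
        rw [norm_smul, Real.norm_of_nonneg hα.le]
    _ ≤ ‖x (k+1) - x k‖ + ‖x (k+2) - x (k+1)‖ + α * (L * ‖x (k+1) - x k‖) := by
        rw [ppdg_smul_adjoint_dual_diff A hx]
        exact (norm_add_le _ _).trans (add_le_add (norm_sub_le _ _) hgrad)
    _ = (1 + α * L) * ‖x (k+1) - x k‖ + ‖x (k+2) - x (k+1)‖ := by ring

theorem lagrangian_dual_step_le (hconv : ConvexOn ℝ univ hs)
    (hLip : ∀ p q, ‖f' p - f' q‖ ≤ L * ‖p - q‖) (hα : 0 < α)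
    (hx : ∀ k, x (k+1) = x k - α • (f' (x k) + A.adjoint (y k)))
    (hy : ∀ k, IsMinOn (ppdgDualObjective A hs α (A ((2:ℝ) • x (k+1) - x k)) (y k)) univ
      (y (k+1))) (k : ℕ) :
    lagrangian A f hs (x (k+2)) (y (k+2)) ≤ lagrangian A f hs (x (k+2)) (y (k+1))
      + ((1 + α * L) * ‖x (k+2) - x (k+1)‖ + ‖x (k+3) - x (k+2)‖) * (L * ‖x (k+1) - x k‖) := by
  have hsub := ppdg_dual_step_subgradient A hconv (hy k) (y (k+2))
  have hA : A (x (k+2)) - (A ((2:ℝ) • x (k+1) - x k) - α • A (A.adjoint (y (k+1) - y k)))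
      = α • A (f' (x k) - f' (x (k+1))) := by
    have h := congrArg A (ppdg_smul_adjoint_dual_diff A hx k)
    simp only [map_add, map_sub, map_smul] at h ⊢
    linear_combination (norm := module) h
  have hgrad : ‖f' (x k) - f' (x (k+1))‖ ≤ L * ‖x (k+1) - x k‖ := by
    rw [norm_sub_rev (x (k+1))]; exact hLip _ _
  have hcoupling : ⟪y (k+2) - y (k+1), α • A (f' (x k) - f' (x (k+1)))⟫
      ≤ ((1 + α * L) * ‖x (k+2) - x (k+1)‖ + ‖x (k+3) - x (k+2)‖) * (L * ‖x (k+1) - x k‖) :=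
    calc _ = α * ⟪A.adjoint (y (k+2) - y (k+1)), f' (x k) - f' (x (k+1))⟫ := by
          rw [real_inner_smul_right, A.adjoint_inner_left]
      _ ≤ α * ‖A.adjoint (y (k+2) - y (k+1))‖ * ‖f' (x k) - f' (x (k+1))‖ := by
          rw [mul_assoc]; exact mul_le_mul_of_nonneg_left (real_inner_le_norm _ _) hα.le
      _ ≤ _ := by
          have hdual := ppdg_norm_adjoint_dual_diff_le A hLip hα hx (k+1)
          exact mul_le_mul hdual hgrad (norm_nonneg _)
            ((by positivity : (0:ℝ) ≤ α * _).trans hdual)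
  have hdiff : lagrangian A f hs (x (k+2)) (y (k+2)) - lagrangian A f hs (x (k+2)) (y (k+1))
      = ⟪y (k+2) - y (k+1), A (x (k+2))⟫ - (hs (y (k+2)) - hs (y (k+1))) := by
    simp only [lagrangian, inner_sub_left]; ring
  rw [← hA, inner_sub_right] at hcoupling
  linarith

theorem ppdgLyapunov_succ_add_le (hf : ∀ p, HasGradientAt f (f' p) p)
    (hconv : ConvexOn ℝ univ hs) (hLip : ∀ p q, ‖f' p - f' q‖ ≤ L * ‖p - q‖) (hL : 0 ≤ L)
    (hα : 0 < α) (hx : ∀ k, x (k+1) = x k - α • (f' (x k) + A.adjoint (y k)))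
    (hy : ∀ k, IsMinOn (ppdgDualObjective A hs α (A ((2:ℝ) • x (k+1) - x k)) (y k)) univ
      (y (k+1))) (k : ℕ) :
    ppdgLyapunov A f hs L α x y (k+1) + (1/α - 5*L/2 - α*L^2) * ‖x (k+2) - x (k+1)‖ ^ 2
      ≤ ppdgLyapunov A f hs L α x y k := by
  have hdescent := lagrangian_gradient_step_le A (hs := hs) hf hLip hα (q := x (k+2)) (hx (k+1))
  have hascent := lagrangian_dual_step_le A (f := f) hconv hLip hα hx hy k
  simp only [ppdgLyapunov]
  set u₀ := ‖x (k+1) - x k‖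
  set u₁ := ‖x (k+2) - x (k+1)‖
  set u₂ := ‖x (k+3) - x (k+2)‖
  nlinarith [mul_nonneg hL (sq_nonneg (u₀ - u₁)), mul_nonneg hL (sq_nonneg (u₀ - u₂)),
    mul_nonneg (mul_nonneg hα.le (mul_nonneg hL hL)) (sq_nonneg (u₀ - u₁))]

theorem ppdg_summable_sq_norm_dual_diff [FiniteDimensional ℝ Y] (hA : Function.Surjective A)
    (hLip : ∀ p q, ‖f' p - f' q‖ ≤ L * ‖p - q‖) (hα : 0 < α)
    (hx : ∀ k, x (k+1) = x k - α • (f' (x k) + A.adjoint (y k)))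
    (hsx : Summable fun k => ‖x (k+1) - x k‖ ^ 2) :
    Summable fun k => ‖y (k+1) - y k‖ ^ 2 := by
  obtain ⟨K, hK⟩ := A.exists_antilipschitzWith_adjoint hA
  refine .of_nonneg_of_le (fun _ => sq_nonneg _) (fun k => ?_)
    (((hsx.mul_left ((1 + α * L) ^ 2)).add ((summable_nat_add_iff 1).2 hsx)).mul_left
      (2 * K ^ 2 / α ^ 2))
  have hdual : α * ‖y (k+1) - y k‖
      ≤ K * ((1 + α * L) * ‖x (k+1) - x k‖ + ‖x (k+2) - x (k+1)‖) :=
    calc α * ‖y (k+1) - y k‖ ≤ α * (K * ‖A.adjoint (y (k+1) - y k)‖) :=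
          mul_le_mul_of_nonneg_left (hK.le_mul_norm (map_zero _) _) hα.le
      _ = K * (α * ‖A.adjoint (y (k+1) - y k)‖) := by ring
      _ ≤ _ := mul_le_mul_of_nonneg_left (ppdg_norm_adjoint_dual_diff_le A hLip hα hx k) K.2
  have hsq := pow_le_pow_left₀ (by positivity) hdual 2
  rw [div_mul_eq_mul_div, le_div_iff₀ (by positivity)]
  nlinarith [add_sq_le (a := (1 + α * L) * ‖x (k+1) - x k‖) (b := ‖x (k+2) - x (k+1)‖)]

end PPDG

theorem stmt4_general
    {X : Type*} [NormedAddCommGroup X] [InnerProductSpace ℝ X] [FiniteDimensional ℝ X]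
    {Y : Type*} [NormedAddCommGroup Y] [InnerProductSpace ℝ Y] [FiniteDimensional ℝ Y]
    (A : X →L[ℝ] Y) (hA : Function.Surjective A)
    (f : X → ℝ) (f' : X → X) (hf : ∀ p, HasGradientAt f (f' p) p)
    (Lf : ℝ) (hLf : 0 < Lf) (hLip : ∀ p q, ‖f' p - f' q‖ ≤ Lf * ‖p - q‖)
    (hs : Y → ℝ) (hconv : ConvexOn ℝ Set.univ hs)
    (α : ℝ) (hα : 0 < α)
    (x : ℕ → X) (y : ℕ → Y)
    (hxiter : ∀ k : ℕ,
      x (k+1) = x k - α • (f' (x k) + (ContinuousLinearMap.adjoint A) (y k)))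
    (hyiter : ∀ k : ℕ, ∀ w : Y,
      hs (y (k+1)) - ⟪y (k+1), A ((2:ℝ) • x (k+1) - x k)⟫
        + (1/2) * ⟪α • A ((ContinuousLinearMap.adjoint A) (y (k+1) - y k)), y (k+1) - y k⟫
      ≤ hs w - ⟪w, A ((2:ℝ) • x (k+1) - x k)⟫
        + (1/2) * ⟪α • A ((ContinuousLinearMap.adjoint A) (w - y k)), w - y k⟫)
    (δ b c : ℝ) (hδ : 0 < δ)
    (hbdef : b = 1/(2*α) - Lf/4 - δ/α - α*δ*Lf^2/2 - δ*Lf + α*Lf^2/(4*δ))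
    (hcdef : c = b - α*Lf^2/(2*δ))
    (hcpos : 0 < c)
    (hbound : ∃ R : ℝ, ∀ k : ℕ, ‖x k‖ ≤ R ∧ ‖y k‖ ≤ R) :
    Summable (fun k : ℕ => ‖x (k+1) - x k‖^2)
    ∧ Summable (fun k : ℕ => ‖y (k+1) - y k‖^2)
    ∧ Tendsto (fun k : ℕ => ‖x (k+1) - x k‖) atTop (nhds 0)
    ∧ Tendsto (fun k : ℕ => ‖y (k+1) - y k‖) atTop (nhds 0) := by
  obtain ⟨R, hR⟩ := hbound
  have hfc : Continuous f := Differentiable.continuous fun p => (hf p).differentiableAt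
  have hsc : Continuous hs := continuousOn_univ.1 (hconv.continuousOn isOpen_univ)
  have hΛ := bddBelow_lagrangian_of_bounded A hfc hsc hR
  have hε := ppdg_lyapunov_constant_pos hα hδ (by rwa [hcdef, hbdef] at hcpos)
  have hsx : Summable fun k => ‖x (k+1) - x k‖ ^ 2 :=
    (summable_nat_add_iff 1).1 <| summable_of_add_mul_le hε (fun _ => sq_nonneg _)
      (ppdgLyapunov_bddBelow A hLf.le hα.le hΛ fun k => (hR k).1)
      (ppdgLyapunov_succ_add_le A hf hconv hLip hLf.le hα hxiter
        fun k => isMinOn_univ_iff.2 (hyiter k))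
  have hsy := ppdg_summable_sq_norm_dual_diff A hA hLip hα hxiter hsx
  exact ⟨hsx, hsy, tendsto_norm_atTop_zero_of_summable_sq hsx,
    tendsto_norm_atTop_zero_of_summable_sq hsy⟩

/-- if the PPDG sequence is bounded, the squared successive differences are
summable; in particular the successive differences tend to zero. -/
theorem stmt4
    {X : Type*} [NormedAddCommGroup X] [InnerProductSpace ℝ X] [FiniteDimensional ℝ X]
    {Y : Type*} [NormedAddCommGroup Y] [InnerProductSpace ℝ Y] [FiniteDimensional ℝ Y]
    (A : X →L[ℝ] Y) (hA : Function.Surjective A)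
    (f : X → ℝ) (f' : X → X) (hf : ∀ p, HasGradientAt f (f' p) p)
    (Lf : ℝ) (hLf : 0 < Lf) (hLip : ∀ p q, ‖f' p - f' q‖ ≤ Lf * ‖p - q‖)
    (hs : Y → ℝ) (hconv : ConvexOn ℝ Set.univ hs)
    (hbdd : ∀ w : Y, BddBelow (Set.range fun p : X => f p + ⟪w, A p⟫ - hs w))
    (α : ℝ) (hα : 0 < α)
    (x : ℕ → X) (y : ℕ → Y)
    (hxiter : ∀ k : ℕ,
      x (k+1) = x k - α • (f' (x k) + (ContinuousLinearMap.adjoint A) (y k)))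
    (hyiter : ∀ k : ℕ, ∀ w : Y,
      hs (y (k+1)) - ⟪y (k+1), A ((2:ℝ) • x (k+1) - x k)⟫
        + (1/2) * ⟪α • A ((ContinuousLinearMap.adjoint A) (y (k+1) - y k)), y (k+1) - y k⟫
      ≤ hs w - ⟪w, A ((2:ℝ) • x (k+1) - x k)⟫
        + (1/2) * ⟪α • A ((ContinuousLinearMap.adjoint A) (w - y k)), w - y k⟫)
    (δ a b c : ℝ) (hδ : 0 < δ)
    (hadef : a = δ / α)
    (hbdef : b = 1/(2*α) - Lf/4 - δ/α - α*δ*Lf^2/2 - δ*Lf + α*Lf^2/(4*δ))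
    (hcdef : c = b - α*Lf^2/(2*δ))
    (hapos : 0 < a) (hbpos : 0 < b) (hcpos : 0 < c)
    (hbound : ∃ R : ℝ, ∀ k : ℕ, ‖x k‖ ≤ R ∧ ‖y k‖ ≤ R) :
    Summable (fun k : ℕ => ‖x (k+1) - x k‖^2)
    ∧ Summable (fun k : ℕ => ‖y (k+1) - y k‖^2)
    ∧ Tendsto (fun k : ℕ => ‖x (k+1) - x k‖) atTop (nhds 0)
    ∧ Tendsto (fun k : ℕ => ‖y (k+1) - y k‖) atTop (nhds 0) :=
  stmt4_general A hA f f' hf Lf hLf hLip hs hconv α hα x y hxiter hyiter δ b c hδ hbdef hcdef hcpos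
    hbound
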